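/- Let $0 < \hat\sigma < \sigma$, let $z_s(g) = 1/g + s^2 g$ for $s > 0$, and let $a < b$ be real numbers with $g_\sigma(b) < g_\sigma(a)$ both nonzero, where $g_\sigma$ is the Stieltjes transform of the semicircle law of variance $\sigma^2$ restricted to $\mathbb{R} \setminus [-2\sigma, 2\sigma]$ and $a, b$ lie in the same component of this set. Then $z_{\hat\sigma}(g_\sigma(b)) - z_{\hat\sigma}(g_\sigma(a)) \geq b - a$. -/

import Mathlib

/-- The Stieltjes transform of the semicircle law of variance `σ^2`, on `ℝ \ [-2σ, 2σ]`,
given by its explicit formula. -/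
noncomputable def gSCReal (σ x : ℝ) : ℝ :=
  x / (2 * σ^2) * (1 - Real.sqrt (1 - 4 * σ^2 / x^2))

/-- Inverse of the Stieltjes transform of the semicircle law of variance `s^2`. -/
noncomputable def zS (s g : ℝ) : ℝ := 1 / g + s^2 * g

/-! With `r = √(1 - 4σ²/x²) < 1` one has `1 - r² = 4σ²/x²`, so `1 / g_σ(x) = x (1 + r) / 2`
and `σ² g_σ(x) = x (1 - r) / 2`, which add up to `x`. The difference
`z_s(g_σ(b)) - z_s(g_σ(a))` is affine in `s²` with slope `g_σ(b) - g_σ(a) ≤ 0` and equals `b - a`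
at `s = σ`, so it can only grow when `σ` is replaced by a smaller `σ̂`. -/

theorem zS_gSCReal {σ x : ℝ} (hσ : σ ≠ 0) (hx : (2 * σ) ^ 2 < x ^ 2) :
    zS σ (gSCReal σ x) = x := by
  have hx0 : x ≠ 0 := by rintro rfl; nlinarith
  set r := Real.sqrt (1 - 4 * σ ^ 2 / x ^ 2) with hr_def
  have hr_sq : r ^ 2 = 1 - 4 * σ ^ 2 / x ^ 2 := Real.sq_sqrt <| by
    rw [sub_nonneg, div_le_one (by positivity)]; linarith
  have hr_lt : r < 1 := by
    rw [hr_def, Real.sqrt_lt' one_pos, one_pow]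
    have : 0 < 4 * σ ^ 2 / x ^ 2 := by positivity
    linarith
  have hr_ne : 1 - r ≠ 0 := by linarith
  have hr_sq' : r ^ 2 * x ^ 2 = x ^ 2 - 4 * σ ^ 2 := by
    rw [hr_sq]; field_simp
  rw [zS, gSCReal, ← hr_def]
  field_simp
  linear_combination hr_sq'

theorem antitoneOn_zS_sub_zS {g₁ g₂ : ℝ} (hg : g₁ ≤ g₂) :
    AntitoneOn (fun s ↦ zS s g₁ - zS s g₂) (Set.Ici 0) := by
  intro s hs t _ hst
  have : s ^ 2 ≤ t ^ 2 := pow_le_pow_left₀ hs hst 2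
  simp only [zS]
  nlinarith

theorem zS_gSCReal_interval_grows_general (σ σhat : ℝ) (hσhat : 0 < σhat) (hlt : σhat < σ)
    (a b : ℝ) (hab : a < b) (hcomp : 2 * σ < a ∨ b < -(2 * σ))
    (hg : gSCReal σ b < gSCReal σ a) :
    b - a ≤ zS σhat (gSCReal σ b) - zS σhat (gSCReal σ a) := by
  have hσ : 0 < σ := hσhat.trans hlt
  have ha : (2 * σ) ^ 2 < a ^ 2 := by rcases hcomp with h | h <;> nlinarith
  have hb : (2 * σ) ^ 2 < b ^ 2 := by rcases hcomp with h | h <;> nlinarith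
  calc b - a = zS σ (gSCReal σ b) - zS σ (gSCReal σ a) := by
        rw [zS_gSCReal hσ.ne' ha, zS_gSCReal hσ.ne' hb]
    _ ≤ zS σhat (gSCReal σ b) - zS σhat (gSCReal σ a) :=
        antitoneOn_zS_sub_zS hg.le (Set.mem_Ici.2 hσhat.le) (Set.mem_Ici.2 hσ.le) hlt.le

theorem zS_gSCReal_interval_grows (σ σhat : ℝ) (hσhat : 0 < σhat) (hlt : σhat < σ)
    (a b : ℝ) (hab : a < b) (hcomp : 2 * σ < a ∨ b < -(2 * σ))
    (hg : gSCReal σ b < gSCReal σ a)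
    (ha0 : gSCReal σ a ≠ 0) (hb0 : gSCReal σ b ≠ 0) :
    b - a ≤ zS σhat (gSCReal σ b) - zS σhat (gSCReal σ a) :=
  zS_gSCReal_interval_grows_general σ σhat hσhat hlt a b hab hcomp hg
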